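/- (One-variable case of Theorem 1, uniqueness and existence.) Let J ⊆ {-1, 0, 1, 2, …} be a finite set, let e(r) and f_j(r) for j ∈ J be formal power series in x, q, r over a commutative ring. Then there exists a unique formal power series F(r) in x, q, r satisfying F(r) = e(r) + Σ_{j∈J} x·f_j(r)·F(σ_j(r)), where σ_j(r) = 1 if j = −1 and σ_j(r) = q^j r if j ≥ 0. -/

import Mathlib

/-!
Comparing coefficients of `x^n`, the functional equation says exactly that the constant
coefficient of `F` is `e` and that the coefficient of `x^(n+1)` is
`T(F_n) = Σ_j f_j · σ_j(F_n)`. So `F_n = T^[n] e` is forced, and this sequence is a solution.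
-/

noncomputable section

variable (R : Type*) [CommRing R]

/-- The coefficient ring `R[[q]][r]`: polynomials in `r` over formal power
series in `q`. -/
abbrev QR := Polynomial (PowerSeries R)

/-- The substitution `σ_j`: `r ↦ 1` if `j = -1`, and `r ↦ q^j r` if `j ≥ 0`. -/
def tau (j : ℤ) : QR R →+* QR R :=
  if j = -1 then (Polynomial.aeval (1 : QR R)).toRingHom
  else (Polynomial.aeval ((Polynomial.C (PowerSeries.X ^ j.toNat) : QR R) * Polynomial.X)).toRingHom

namespace PowerSeries

variable {A : Type*} [Semiring A]

theorem eq_C_add_X_mul_iff (F G : A⟦X⟧) (e : A) :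
    F = C e + X * G ↔ coeff 0 F = e ∧ ∀ n, coeff (n + 1) F = coeff n G := by
  constructor
  · rintro rfl
    simp [coeff_succ_X_mul]
  · rintro ⟨h₀, hsucc⟩
    ext (_ | n)
    · simp [h₀]
    · simp [hsucc, coeff_succ_X_mul]

theorem existsUnique_coeff_zero_coeff_succ (e : A) (T : A → A) :
    ∃! F : A⟦X⟧, coeff 0 F = e ∧ ∀ n, coeff (n + 1) F = T (coeff n F) := by
  refine ⟨mk fun n => T^[n] e, ⟨by simp, fun n => by simp [Function.iterate_succ_apply']⟩, ?_⟩
  rintro G ⟨h₀, hsucc⟩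
  ext n
  induction n with
  | zero => simp [h₀]
  | succ n ih => simp [hsucc, ih, Function.iterate_succ_apply']

theorem coeff_sum_C_mul_map {ι : Type*} (J : Finset ι) (f : ι → A) (σ : ι → A →+* A)
    (F : A⟦X⟧) (n : ℕ) :
    coeff n (∑ j ∈ J, C (f j) * map (σ j) F) = ∑ j ∈ J, f j * σ j (coeff n F) := by
  simp [map_sum, coeff_C_mul, coeff_map]

end PowerSeries

open PowerSeries in
theorem exists_unique_solution (J : Finset ℤ)
    (e : QR R) (f : ℤ → QR R) :
    ∃! F : PowerSeries (QR R),
      F = PowerSeries.C e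
        + ∑ j ∈ J, PowerSeries.X * PowerSeries.C (f j)
            * PowerSeries.map (tau R j) F := by
  have recursion : ∀ F : PowerSeries (QR R),
      (F = C e + ∑ j ∈ J, X * C (f j) * map (tau R j) F) ↔
        coeff 0 F = e ∧ ∀ n, coeff (n + 1) F = ∑ j ∈ J, f j * tau R j (coeff n F) := by
    intro F
    simp_rw [mul_assoc, ← Finset.mul_sum, eq_C_add_X_mul_iff, coeff_sum_C_mul_map]
  exact (existsUnique_congr recursion).2
    (existsUnique_coeff_zero_coeff_succ e fun a => ∑ j ∈ J, f j * tau R j a)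

end
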